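/- There exists a winning protocol for n prisoners and r rooms when each room has exactly 4 possible configurations and all rooms start in a fixed known configuration: that is, a deterministic strategy under which, for every valid schedule (sending each prisoner to each room infinitely often), some prisoner eventually declares, and any declaration happens only after every prisoner has visited every room at least once. -/
import Mathlib


/-- A prisoner's observation history: the list of (configuration seen on entry,
configuration left on exit) for each of his visits so far. -/
abbrev Hist (C : Type) := List (C × C)

/-- A deterministic strategy: for each prisoner, a function from his history
and the configuration of the room he enters to the configuration he leaves the
room in, together with whether he declares. -/
abbrev Strategy (n : ℕ) (C : Type) := Fin n → Hist C → C → C × Bool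

/-- A schedule: who visits which room at each step. -/
abbrev Schedule (n r : ℕ) := ℕ → Fin n × Fin r

/-- Global state of an execution. -/
structure PState (n r : ℕ) (C : Type) where
  rooms : Fin r → C
  hist : Fin n → Hist C
  declared : Bool

/-- One visit of prisoner `v.1` to room `v.2`. -/
def pstep {n r : ℕ} {C : Type} (σ : Strategy n C) (v : Fin n × Fin r)
    (s : PState n r C) : PState n r C :=
  let cur := s.rooms v.2
  let a := σ v.1 (s.hist v.1) cur
  { rooms := Function.update s.rooms v.2 a.1
    hist := Function.update s.hist v.1 (s.hist v.1 ++ [(cur, a.1)])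
    declared := s.declared || a.2 }

/-- The state after `t` visits, starting from initial room configurations `init`. -/
def prun {n r : ℕ} {C : Type} (σ : Strategy n C) (sch : Schedule n r)
    (init : Fin r → C) : ℕ → PState n r C
  | 0 => ⟨init, fun _ => [], false⟩
  | t + 1 => pstep σ (sch t) (prun σ sch init t)

/-- A schedule is valid if every prisoner visits every room infinitely often. -/
def ValidSchedule {n r : ℕ} (sch : Schedule n r) : Prop :=
  ∀ (p : Fin n) (rm : Fin r), {t | sch t = (p, rm)}.Infinite

/-- Prisoner `p` has visited room `rm` within the first `t` visits. -/
def VisitedBy {n r : ℕ} (sch : Schedule n r) (t : ℕ) (p : Fin n) (rm : Fin r) : Prop :=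
  ∃ t' < t, sch t' = (p, rm)

/-- A strategy is winning for initial configurations `init` if under every
valid schedule some prisoner eventually declares, and every declaration occurs
only after each prisoner has visited every room at least once. -/
def Winning {n r : ℕ} {C : Type} (σ : Strategy n C) (init : Fin r → C) : Prop :=
  ∀ sch : Schedule n r, ValidSchedule sch →
    (∃ t, (prun σ sch init t).declared = true) ∧
    (∀ t, (prun σ sch init t).declared = true → ∀ p rm, VisitedBy sch t p rm)

namespace FourCfg

/-- Leader's internal state. -/
inductive LSt where
  | pre (cnt : ℕ)
  | pre2 (cnt : ℕ)
  | waitc (s : ℕ) (placed : Bool)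
  | coll (s : ℕ) (cnt : ℕ)
  | rst (s : ℕ) (cnt : ℕ)
  | ldone
deriving DecidableEq

/-- Idler's internal state. -/
inductive ISt where
  | fresh
  | act (cnt : ℕ)
  | idone
deriving DecidableEq

def consumeRes (n r s c : ℕ) : LSt × Fin 4 × Bool :=
  if c = r then (if s + 1 = n - 1 then (.ldone, 3, true) else (.rst s 0, 3, false))
  else (.coll s c, 3, false)

def lstep (n r : ℕ) : LSt → Fin 4 → LSt × Fin 4 × Bool
  | .pre c, v =>
      if v = 0 then
        (if c + 1 = r then (if n = 1 then (.ldone, 1, true) else (.pre2 0, 1, false))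
         else (.pre (c+1), 1, false))
      else (.pre c, v, false)
  | .pre2 c, v =>
      if v = 1 then
        (if c + 1 = r then (.waitc 0 false, 0, false) else (.pre2 (c+1), 0, false))
      else (.pre2 c, v, false)
  | .waitc s placed, v =>
      if v = 0 then (if placed then (.waitc s true, 0, false) else (.waitc s true, 2, false))
      else if v = 1 then consumeRes n r s 1
      else (.waitc s placed, v, false)
  | .coll s c, v =>
      if v = 1 then consumeRes n r s (c+1) else (.coll s c, v, false)
  | .rst s c, v =>
      if v = 3 then (if c + 1 = r then (.waitc (s+1) false, 0, false) else (.rst s (c+1), 0, false))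
      else (.rst s c, v, false)
  | .ldone, v => (.ldone, v, false)

def istep (r : ℕ) : ISt → Fin 4 → ISt × Fin 4 × Bool
  | .fresh, v =>
      if v = 2 then (if 1 = r then (.idone, 1, false) else (.act 1, 1, false))
      else (.fresh, v, false)
  | .act c, v =>
      if v = 0 then (if c + 1 = r then (.idone, 1, false) else (.act (c+1), 1, false))
      else (.act c, v, false)
  | .idone, v => (.idone, v, false)

def lstate (n r : ℕ) (h : Hist (Fin 4)) : LSt :=
  h.foldl (fun st e => (lstep n r st e.1).1) (.pre 0)

def istate (r : ℕ) (h : Hist (Fin 4)) : ISt :=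
  h.foldl (fun st e => (istep r st e.1).1) .fresh

def strat (n r : ℕ) : Strategy n (Fin 4) := fun p h v =>
  if (p : ℕ) = 0 then (lstep n r (lstate n r h) v).2 else (istep r (istate r h) v).2

lemma lstate_append (n r : ℕ) (h : Hist (Fin 4)) (c w : Fin 4) :
    lstate n r (h ++ [(c, w)]) = (lstep n r (lstate n r h) c).1 := by
  simp [lstate, List.foldl_append]

lemma istate_append (r : ℕ) (h : Hist (Fin 4)) (c w : Fin 4) :
    istate r (h ++ [(c, w)]) = (istep r (istate r h) c).1 := by
  simp [istate, List.foldl_append]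

section Run

variable (n r : ℕ) (hn : 0 < n) (sch : Schedule n r)

def L0 : Fin n := ⟨0, hn⟩

def RUN (t : ℕ) : PState n r (Fin 4) := prun (strat n r) sch (fun _ => 0) t

def V (t : ℕ) (rm : Fin r) : Fin 4 := (RUN n r sch t).rooms rm

def LS (t : ℕ) : LSt := lstate n r ((RUN n r sch t).hist (L0 n hn))

def IS (q : Fin n) (t : ℕ) : ISt := istate r ((RUN n r sch t).hist q)

def Dc (t : ℕ) : Bool := (RUN n r sch t).declared

def OUT (t : ℕ) : Fin 4 × Bool :=
  strat n r (sch t).1 ((RUN n r sch t).hist (sch t).1) (V n r sch t (sch t).2)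

lemma RUN_succ (t : ℕ) : RUN n r sch (t+1) = pstep (strat n r) (sch t) (RUN n r sch t) := rfl

lemma V_succ (t : ℕ) (rm' : Fin r) :
    V n r sch (t+1) rm' = if rm' = (sch t).2 then (OUT n r sch t).1 else V n r sch t rm' := by
  simp [V, RUN_succ, pstep, OUT, Function.update_apply]

lemma hist_succ (t : ℕ) (q : Fin n) :
    (RUN n r sch (t+1)).hist q =
      if q = (sch t).1 then
        (RUN n r sch t).hist (sch t).1 ++ [(V n r sch t (sch t).2, (OUT n r sch t).1)]
      else (RUN n r sch t).hist q := by
  simp [RUN_succ, pstep, OUT, V, Function.update_apply]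

lemma Dc_succ (t : ℕ) : Dc n r sch (t+1) = (Dc n r sch t || (OUT n r sch t).2) := by
  simp [Dc, RUN_succ, pstep, OUT, V]

lemma OUT_l (t : ℕ) (h : (sch t).1 = L0 n hn) :
    OUT n r sch t = (lstep n r (LS n r hn sch t) (V n r sch t (sch t).2)).2 := by
  simp [OUT, strat, h, LS, L0]

lemma OUT_i (t : ℕ) (h : (sch t).1 ≠ L0 n hn) :
    OUT n r sch t = (istep r (IS n r sch (sch t).1 t) (V n r sch t (sch t).2)).2 := by
  have : ((sch t).1 : ℕ) ≠ 0 := by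
    intro h0
    exact h (Fin.ext h0)
  simp [OUT, strat, this, IS]

lemma LS_succ (t : ℕ) :
    LS n r hn sch (t+1) =
      if (sch t).1 = L0 n hn then (lstep n r (LS n r hn sch t) (V n r sch t (sch t).2)).1
      else LS n r hn sch t := by
  by_cases h : (sch t).1 = L0 n hn
  · rw [if_pos h]
    show lstate n r ((RUN n r sch (t+1)).hist (L0 n hn)) = _
    rw [hist_succ]
    rw [if_pos h.symm, h, lstate_append]
    rfl
  · rw [if_neg h]
    show lstate n r ((RUN n r sch (t+1)).hist (L0 n hn)) = _
    rw [hist_succ, if_neg (fun he => h he.symm)]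
    rfl

lemma IS_succ (t : ℕ) (q : Fin n) :
    IS n r sch q (t+1) =
      if q = (sch t).1 then (istep r (IS n r sch q t) (V n r sch t (sch t).2)).1
      else IS n r sch q t := by
  by_cases h : q = (sch t).1
  · rw [if_pos h]
    show istate r ((RUN n r sch (t+1)).hist q) = _
    rw [hist_succ, if_pos h, ← h, istate_append]
    rfl
  · rw [if_neg h]
    show istate r ((RUN n r sch (t+1)).hist q) = _
    rw [hist_succ, if_neg h]
    rfl

lemma RUN_zero : RUN n r sch 0 = ⟨fun _ => 0, fun _ => [], false⟩ := rfl

end Run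

end FourCfg
namespace FourCfg

inductive Desc (n r : ℕ) where
  | pre (S : Finset (Fin r))
  | pre2 (S : Finset (Fin r))
  | offl (s : ℕ) (done : Finset (Fin n))
  | offp (s : ℕ) (o : Fin r) (done : Finset (Fin n))
  | mk (s : ℕ) (a : Fin n) (M D : Finset (Fin r)) (done : Finset (Fin n))
  | rs (s : ℕ) (S : Finset (Fin r)) (done : Finset (Fin n))
  | decl

def mu {n r : ℕ} : Desc n r → ℕ
  | .pre S => (n+1)*(4*r+4) - S.card
  | .pre2 S => n*(4*r+4) + 2*r - S.card
  | .offl s _ => (n-1-s)*(4*r+4) + 3*r + 3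
  | .offp s _ _ => (n-1-s)*(4*r+4) + 3*r + 2
  | .mk s _ M D _ => (n-1-s)*(4*r+4) + 3*r + 1 - (M.card + D.card)
  | .rs s S _ => (n-1-s)*(4*r+4) + r - S.card
  | .decl => 0

section Holds

variable (n r : ℕ) (hn : 0 < n) (sch : Schedule n r)

/-- prisoner `p` has visited every room by time `t`. -/
def vAll (t : ℕ) (p : Fin n) : Prop := ∀ rm, VisitedBy sch t p rm

def doneOK (t : ℕ) (dn : Finset (Fin n)) : Prop :=
  L0 n hn ∉ dn ∧ ∀ p ∈ dn, IS n r sch p t = .idone ∧ vAll n r sch t p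

def freshOK (t : ℕ) (dn : Finset (Fin n)) (ex : Finset (Fin n)) : Prop :=
  ∀ p, p ≠ L0 n hn → p ∉ dn → p ∉ ex → IS n r sch p t = .fresh

def holds : Desc n r → ℕ → Prop
  | .pre S, t =>
      S.card < r ∧ (∀ rm, V n r sch t rm = if rm ∈ S then 1 else 0) ∧
      LS n r hn sch t = .pre S.card ∧
      (∀ rm ∈ S, VisitedBy sch t (L0 n hn) rm) ∧
      (∀ p, p ≠ L0 n hn → IS n r sch p t = .fresh) ∧ Dc n r sch t = false
  | .pre2 S, t =>
      2 ≤ n ∧ S.card < r ∧ (∀ rm, V n r sch t rm = if rm ∈ S then 0 else 1) ∧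
      LS n r hn sch t = .pre2 S.card ∧ vAll n r sch t (L0 n hn) ∧
      (∀ p, p ≠ L0 n hn → IS n r sch p t = .fresh) ∧ Dc n r sch t = false
  | .offl s dn, t =>
      2 ≤ n ∧ s + 2 ≤ n ∧ dn.card = s ∧ (∀ rm, V n r sch t rm = 0) ∧
      LS n r hn sch t = .waitc s false ∧ vAll n r sch t (L0 n hn) ∧
      doneOK n r hn sch t dn ∧ freshOK n r hn sch t dn ∅ ∧ Dc n r sch t = false
  | .offp s o dn, t =>
      2 ≤ n ∧ s + 2 ≤ n ∧ dn.card = s ∧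
      V n r sch t o = 2 ∧ (∀ rm, rm ≠ o → V n r sch t rm = 0) ∧
      LS n r hn sch t = .waitc s true ∧ vAll n r sch t (L0 n hn) ∧
      doneOK n r hn sch t dn ∧ freshOK n r hn sch t dn ∅ ∧ Dc n r sch t = false
  | .mk s a M D dn, t =>
      2 ≤ n ∧ s + 2 ≤ n ∧ dn.card = s ∧ a ≠ L0 n hn ∧ a ∉ dn ∧
      D ⊆ M ∧ M.card ≤ r ∧ D.card < r ∧ 1 ≤ M.card ∧
      (∀ rm, V n r sch t rm = if rm ∈ D then 3 else if rm ∈ M then 1 else 0) ∧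
      LS n r hn sch t = (if D.card = 0 then LSt.waitc s true else LSt.coll s D.card) ∧
      IS n r sch a t = (if M.card = r then ISt.idone else ISt.act M.card) ∧
      (∀ rm ∈ M, VisitedBy sch t a rm) ∧ vAll n r sch t (L0 n hn) ∧
      doneOK n r hn sch t dn ∧ freshOK n r hn sch t dn {a} ∧ Dc n r sch t = false
  | .rs s S dn, t =>
      2 ≤ n ∧ s + 3 ≤ n ∧ dn.card = s + 1 ∧ S.card < r ∧
      (∀ rm, V n r sch t rm = if rm ∈ S then 0 else 3) ∧
      LS n r hn sch t = .rst s S.card ∧ vAll n r sch t (L0 n hn) ∧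
      doneOK n r hn sch t dn ∧ freshOK n r hn sch t dn ∅ ∧ Dc n r sch t = false
  | .decl, t => Dc n r sch t = true ∧ ∀ p rm, VisitedBy sch t p rm

lemma vb_mono {t t' : ℕ} (h : t ≤ t') {p rm} (hv : VisitedBy sch t p rm) :
    VisitedBy sch t' p rm := by
  obtain ⟨u, hu, he⟩ := hv
  exact ⟨u, lt_of_lt_of_le hu h, he⟩

lemma vAll_mono {t t' : ℕ} (h : t ≤ t') {p} (hv : vAll n r sch t p) : vAll n r sch t' p :=
  fun rm => vb_mono n r sch h (hv rm)

/-- If nothing observable changed during the step, every descriptor persists. -/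
lemma holds_frozen (d : Desc n r) (t : ℕ)
    (hV : ∀ rm, V n r sch (t+1) rm = V n r sch t rm)
    (hLS : LS n r hn sch (t+1) = LS n r hn sch t)
    (hIS : ∀ q, q ≠ L0 n hn → IS n r sch q (t+1) = IS n r sch q t)
    (hDc : Dc n r sch (t+1) = Dc n r sch t)
    (hd : holds n r hn sch d t) : holds n r hn sch d (t+1) := by
  have hle : t ≤ t + 1 := Nat.le_succ t
  have hdone : ∀ dn, doneOK n r hn sch t dn → doneOK n r hn sch (t+1) dn := by
    intro dn ⟨h1, h2⟩
    exact ⟨h1, fun p hp => ⟨(hIS p (fun he => h1 (he ▸ hp))) ▸ (h2 p hp).1,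
      vAll_mono n r sch hle (h2 p hp).2⟩⟩
  have hfresh : ∀ dn ex, freshOK n r hn sch t dn ex → freshOK n r hn sch (t+1) dn ex := by
    intro dn ex hf p h1 h2 h3
    rw [hIS p h1]; exact hf p h1 h2 h3
  cases d with
  | pre S =>
      obtain ⟨a1, a2, a3, a4, a5, a6⟩ := hd
      refine ⟨a1, fun rm => (hV rm).trans (a2 rm), hLS.trans a3,
        fun rm h => vb_mono n r sch hle (a4 rm h),
        fun p hp => (hIS p hp).trans (a5 p hp), hDc.trans a6⟩
  | pre2 S =>
      obtain ⟨a0, a1, a2, a3, a4, a5, a6⟩ := hd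
      refine ⟨a0, a1, fun rm => (hV rm).trans (a2 rm), hLS.trans a3,
        vAll_mono n r sch hle a4, fun p hp => (hIS p hp).trans (a5 p hp), hDc.trans a6⟩
  | offl s dn =>
      obtain ⟨a0, a1, a2, a3, a4, a5, a6, a7, a8⟩ := hd
      exact ⟨a0, a1, a2, fun rm => (hV rm).trans (a3 rm), hLS.trans a4,
        vAll_mono n r sch hle a5, hdone dn a6, hfresh dn ∅ a7, hDc.trans a8⟩
  | offp s o dn =>
      obtain ⟨a0, a1, a2, a3, a3', a4, a5, a6, a7, a8⟩ := hd
      exact ⟨a0, a1, a2, (hV o).trans a3, fun rm h => (hV rm).trans (a3' rm h), hLS.trans a4,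
        vAll_mono n r sch hle a5, hdone dn a6, hfresh dn ∅ a7, hDc.trans a8⟩
  | mk s a M D dn =>
      obtain ⟨a0, a1, a2, a3, a4, a5, a6, a7, a8, a9, a10, a11, a12, a13, a14, a15, a16⟩ := hd
      exact ⟨a0, a1, a2, a3, a4, a5, a6, a7, a8, fun rm => (hV rm).trans (a9 rm),
        hLS.trans a10, (hIS a a3).trans a11,
        fun rm h => vb_mono n r sch hle (a12 rm h), vAll_mono n r sch hle a13,
        hdone dn a14, hfresh dn {a} a15, hDc.trans a16⟩
  | rs s S dn =>
      obtain ⟨a0, a1, a2, a3, a4, a5, a6, a7, a8, a9⟩ := hd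
      exact ⟨a0, a1, a2, a3, fun rm => (hV rm).trans (a4 rm), hLS.trans a5,
        vAll_mono n r sch hle a6, hdone dn a7, hfresh dn ∅ a8, hDc.trans a9⟩
  | decl =>
      obtain ⟨a1, a2⟩ := hd
      exact ⟨hDc.trans a1, fun p rm => vb_mono n r sch hle (a2 p rm)⟩

end Holds

end FourCfg
namespace FourCfg

section Noop

variable (n r : ℕ) (hn : 0 < n) (sch : Schedule n r)

/-- A leader visit whose machine step changes nothing preserves any descriptor. -/
lemma noop_l (d : Desc n r) (t : ℕ) (h : (sch t).1 = L0 n hn)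
    (hst : lstep n r (LS n r hn sch t) (V n r sch t (sch t).2)
        = (LS n r hn sch t, V n r sch t (sch t).2, false))
    (hd : holds n r hn sch d t) : holds n r hn sch d (t+1) := by
  have hout : OUT n r sch t = (V n r sch t (sch t).2, false) := by
    rw [OUT_l n r hn sch t h, hst]
  refine holds_frozen n r hn sch d t ?_ ?_ ?_ ?_ hd
  · intro rm
    rw [V_succ, hout]
    split
    · next he => rw [he]
    · rfl
  · rw [LS_succ, if_pos h, hst]
  · intro q hq
    rw [IS_succ, if_neg (fun he => hq (he.trans h))]
  · rw [Dc_succ, hout, Bool.or_false]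

/-- An idler visit whose machine step changes nothing preserves any descriptor. -/
lemma noop_i (d : Desc n r) (t : ℕ) (h : (sch t).1 ≠ L0 n hn)
    (hst : istep r (IS n r sch (sch t).1 t) (V n r sch t (sch t).2)
        = (IS n r sch (sch t).1 t, V n r sch t (sch t).2, false))
    (hd : holds n r hn sch d t) : holds n r hn sch d (t+1) := by
  have hout : OUT n r sch t = (V n r sch t (sch t).2, false) := by
    rw [OUT_i n r hn sch t h, hst]
  refine holds_frozen n r hn sch d t ?_ ?_ ?_ ?_ hd
  · intro rm
    rw [V_succ, hout]
    split
    · next he => rw [he]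
    · rfl
  · rw [LS_succ, if_neg h]
  · intro q hq
    rw [IS_succ]
    split
    · next he => rw [he, hst]
    · rfl
  · rw [Dc_succ, hout, Bool.or_false]

/-- Characterisation of situations in which a visit can be a no-op. -/
def noopChar (t : ℕ) : Desc n r → Prop
  | .pre S => (sch t).1 = L0 n hn → (sch t).2 ∈ S
  | .pre2 S => (sch t).1 = L0 n hn → (sch t).2 ∈ S
  | .offl _ _ => (sch t).1 ≠ L0 n hn
  | .offp _ o dn => (sch t).1 = L0 n hn ∨ (sch t).1 ∈ dn ∨ (sch t).2 ≠ o
  | .mk _ a M D _ =>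
      ((sch t).1 = L0 n hn → ((sch t).2 ∈ D ∨ (sch t).2 ∉ M)) ∧
      ((sch t).1 = a → (M.card = r ∨ (sch t).2 ∈ M))
  | .rs _ S _ => (sch t).1 = L0 n hn → (sch t).2 ∈ S
  | .decl => True

end Noop

end FourCfg
namespace FourCfg

section Steps

variable (n r : ℕ) (hn : 0 < n) (sch : Schedule n r)

lemma insert_eq_univ {r : ℕ} (S : Finset (Fin r)) (rm : Fin r) (hm : rm ∉ S)
    (hc : S.card + 1 = r) : insert rm S = Finset.univ := by
  apply Finset.eq_univ_of_card
  rw [Finset.card_insert_of_notMem hm, hc, Fintype.card_fin]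

lemma new_visit (t : ℕ) (p : Fin n) (rm : Fin r) (hsch : sch t = (p, rm)) :
    VisitedBy sch (t+1) p rm := ⟨t, Nat.lt_succ_self t, hsch⟩

lemma step_pre (S : Finset (Fin r)) (t : ℕ) (hd : holds n r hn sch (.pre S) t) :
    ∃ d', holds n r hn sch d' (t+1) ∧
      ((d' = Desc.pre S ∧ noopChar n r hn sch t (Desc.pre S)) ∨
        mu d' < mu (Desc.pre S : Desc n r)) := by
  obtain ⟨hcard, hrooms, hLS, hfacts, hfresh, hdc⟩ := hd
  rcases hsch : sch t with ⟨p, rm⟩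
  have h1 : (sch t).1 = p := by rw [hsch]
  have h2 : (sch t).2 = rm := by rw [hsch]
  have hle : t ≤ t + 1 := Nat.le_succ t
  have h4 : 4*r+4 ≤ (n+1)*(4*r+4) := Nat.le_mul_of_pos_left _ (by omega)
  by_cases hp : p = L0 n hn
  · subst hp
    by_cases hm : rm ∈ S
    · -- leader sees an already marked room : no-op
      refine ⟨.pre S, noop_l n r hn sch _ t h1 ?_ ?_,
        Or.inl ⟨rfl, fun _ => by rw [h2]; exact hm⟩⟩
      · rw [h2, hrooms rm, if_pos hm, hLS]
        simp [lstep]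
      · exact ⟨hcard, hrooms, hLS, hfacts, hfresh, hdc⟩
    · -- leader marks a fresh room
      have hcur : V n r sch t rm = 0 := by rw [hrooms rm, if_neg hm]
      have hout : OUT n r sch t =
          ((lstep n r (LSt.pre S.card) 0).2 : Fin 4 × Bool) := by
        rw [OUT_l n r hn sch t h1, h2, hcur, hLS]
      have hLS' : LS n r hn sch (t+1) = (lstep n r (LSt.pre S.card) 0).1 := by
        rw [LS_succ, if_pos h1, h2, hcur, hLS]
      have hIS' : ∀ q, q ≠ L0 n hn → IS n r sch q (t+1) = IS n r sch q t := by
        intro q hq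
        rw [IS_succ, if_neg (fun he => hq (he.trans h1))]
      by_cases hc : S.card + 1 = r
      · by_cases hone : n = 1
        · -- everything done : declare
          refine ⟨.decl, ⟨?_, ?_⟩, Or.inr ?_⟩
          · rw [Dc_succ, hout]
            simp [lstep, hc, hone]
          · intro q rm'
            have hq : q = L0 n hn := by
              apply Fin.ext
              have hlt := q.isLt
              have hL : (L0 n hn).val = 0 := rfl
              omega
            have huniv := insert_eq_univ S rm hm hc
            have hmem : rm' ∈ insert rm S := by rw [huniv]; exact Finset.mem_univ rm'
            subst hq
            rcases Finset.mem_insert.mp hmem with he | hS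
            · rw [he]; exact new_visit n r sch t _ rm hsch
            · exact vb_mono n r sch hle (hfacts rm' hS)
          · simp only [mu]
            omega
        · -- move to the reset-back phase pre2
          refine ⟨.pre2 ∅, ⟨by omega, by simpa using (by omega : 0 < r), ?_, ?_, ?_, ?_, ?_⟩,
            Or.inr ?_⟩
          · intro rm'
            rw [V_succ, h2, hout]
            by_cases he : rm' = rm
            · rw [if_pos he]
              simp [lstep, hc, hone]
            · rw [if_neg he]
              have hS : rm' ∈ S := by
                have hmem := insert_eq_univ S rm hm hc ▸ Finset.mem_univ rm'
                rcases Finset.mem_insert.mp hmem with h | h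
                · exact absurd h he
                · exact h
              simp [hrooms rm', if_pos hS]
          · rw [hLS']
            simp [lstep, hc, hone]
          · intro rm'
            have hmem := insert_eq_univ S rm hm hc ▸ Finset.mem_univ rm'
            rcases Finset.mem_insert.mp hmem with h | h
            · rw [h]; exact new_visit n r sch t _ rm hsch
            · exact vb_mono n r sch hle (hfacts rm' h)
          · intro q hq
            rw [hIS' q hq]; exact hfresh q hq
          · rw [Dc_succ, hout]
            simp [lstep, hc, hone, hdc]
          · simp only [mu]
            have hexp : (n+1)*(4*r+4) = n*(4*r+4) + (4*r+4) := by ring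
            have h5 : 4*r+4 ≤ n*(4*r+4) := Nat.le_mul_of_pos_left _ (by omega)
            simp only [Finset.card_empty]
            omega
      · -- continue marking
        refine ⟨.pre (insert rm S), ⟨?_, ?_, ?_, ?_, ?_, ?_⟩, Or.inr ?_⟩
        · rw [Finset.card_insert_of_notMem hm]; omega
        · intro rm'
          rw [V_succ, h2, hout]
          by_cases he : rm' = rm
          · rw [if_pos he, if_pos (by rw [he]; exact Finset.mem_insert_self rm S)]
            simp [lstep, hc]
          · rw [if_neg he, hrooms rm']
            simp [Finset.mem_insert, he]
        · rw [hLS', Finset.card_insert_of_notMem hm]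
          simp [lstep, hc]
        · intro rm' hmem
          rcases Finset.mem_insert.mp hmem with he | hS
          · rw [he]; exact new_visit n r sch t _ rm hsch
          · exact vb_mono n r sch hle (hfacts rm' hS)
        · intro q hq
          rw [hIS' q hq]; exact hfresh q hq
        · rw [Dc_succ, hout]
          simp [lstep, hc, hdc]
        · simp only [mu, Finset.card_insert_of_notMem hm]
          omega
  · -- an idler: always a no-op in this phase
    have hf : IS n r sch p t = .fresh := hfresh p hp
    refine ⟨.pre S, noop_i n r hn sch _ t (h1 ▸ hp) ?_ ?_,
      Or.inl ⟨rfl, fun hL => absurd (h1.symm.trans hL) hp⟩⟩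
    · rw [h1, h2, hf]
      by_cases hm : rm ∈ S
      · rw [hrooms rm, if_pos hm]
        simp [istep]
      · rw [hrooms rm, if_neg hm]
        simp [istep]
    · exact ⟨hcard, hrooms, hLS, hfacts, hfresh, hdc⟩

end Steps

end FourCfg
namespace FourCfg

section Steps2

variable (n r : ℕ) (hn : 0 < n) (sch : Schedule n r)

lemma expand_succ_mul (a b : ℕ) (h : 0 < a) : a * b = (a - 1) * b + b := by
  have h5 : a - 1 + 1 = a := by omega
  calc a * b = (a - 1 + 1) * b := by rw [h5]
    _ = (a - 1) * b + b := by ring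

lemma step_pre2 (S : Finset (Fin r)) (t : ℕ) (hd : holds n r hn sch (.pre2 S) t) :
    ∃ d', holds n r hn sch d' (t+1) ∧
      ((d' = Desc.pre2 S ∧ noopChar n r hn sch t (Desc.pre2 S)) ∨
        mu d' < mu (Desc.pre2 S : Desc n r)) := by
  obtain ⟨h2n, hcard, hrooms, hLS, hvall, hfresh, hdc⟩ := hd
  rcases hsch : sch t with ⟨p, rm⟩
  have h1 : (sch t).1 = p := by rw [hsch]
  have h2 : (sch t).2 = rm := by rw [hsch]
  have hle : t ≤ t + 1 := Nat.le_succ t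
  by_cases hp : p = L0 n hn
  · subst hp
    by_cases hm : rm ∈ S
    · refine ⟨.pre2 S, noop_l n r hn sch _ t h1 ?_ ?_,
        Or.inl ⟨rfl, fun _ => by rw [h2]; exact hm⟩⟩
      · rw [h2, hrooms rm, if_pos hm, hLS]
        simp [lstep]
      · exact ⟨h2n, hcard, hrooms, hLS, hvall, hfresh, hdc⟩
    · have hcur : V n r sch t rm = 1 := by rw [hrooms rm, if_neg hm]
      have hout : OUT n r sch t = ((lstep n r (LSt.pre2 S.card) 1).2 : Fin 4 × Bool) := by
        rw [OUT_l n r hn sch t h1, h2, hcur, hLS]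
      have hLS' : LS n r hn sch (t+1) = (lstep n r (LSt.pre2 S.card) 1).1 := by
        rw [LS_succ, if_pos h1, h2, hcur, hLS]
      have hIS' : ∀ q, q ≠ L0 n hn → IS n r sch q (t+1) = IS n r sch q t := by
        intro q hq
        rw [IS_succ, if_neg (fun he => hq (he.trans h1))]
      by_cases hc : S.card + 1 = r
      · -- back to all-zero : start the first stage
        refine ⟨.offl 0 ∅, ⟨h2n, by omega, Finset.card_empty, ?_, ?_, ?_, ?_, ?_, ?_⟩,
          Or.inr ?_⟩
        · intro rm'
          rw [V_succ, h2, hout]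
          by_cases he : rm' = rm
          · rw [if_pos he]
            simp [lstep, hc]
          · rw [if_neg he]
            have hS : rm' ∈ S := by
              have hmem := insert_eq_univ S rm hm hc ▸ Finset.mem_univ rm'
              rcases Finset.mem_insert.mp hmem with h | h
              · exact absurd h he
              · exact h
            simp [hrooms rm', if_pos hS]
        · rw [hLS']
          simp [lstep, hc]
        · exact vAll_mono n r sch hle hvall
        · exact ⟨Finset.notMem_empty _, fun p hp => absurd hp (Finset.notMem_empty p)⟩
        · intro q hq _ _
          rw [hIS' q hq]; exact hfresh q hq
        · rw [Dc_succ, hout]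
          simp [lstep, hc, hdc]
        · simp only [mu, Nat.sub_zero]
          have hexp := expand_succ_mul n (4*r+4) (by omega)
          omega
      · refine ⟨.pre2 (insert rm S), ⟨h2n, ?_, ?_, ?_, ?_, ?_, ?_⟩, Or.inr ?_⟩
        · rw [Finset.card_insert_of_notMem hm]; omega
        · intro rm'
          rw [V_succ, h2, hout]
          by_cases he : rm' = rm
          · rw [if_pos he, if_pos (by rw [he]; exact Finset.mem_insert_self rm S)]
            simp [lstep, hc]
          · rw [if_neg he, hrooms rm']
            simp [Finset.mem_insert, he]
        · rw [hLS', Finset.card_insert_of_notMem hm]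
          simp [lstep, hc]
        · exact vAll_mono n r sch hle hvall
        · intro q hq
          rw [hIS' q hq]; exact hfresh q hq
        · rw [Dc_succ, hout]
          simp [lstep, hc, hdc]
        · simp only [mu, Finset.card_insert_of_notMem hm]
          have h4 : 4*r+4 ≤ n*(4*r+4) := Nat.le_mul_of_pos_left _ (by omega)
          omega
  · have hf : IS n r sch p t = .fresh := hfresh p hp
    refine ⟨.pre2 S, noop_i n r hn sch _ t (h1 ▸ hp) ?_ ?_,
      Or.inl ⟨rfl, fun hL => absurd (h1.symm.trans hL) hp⟩⟩
    · rw [h1, h2, hf, hrooms rm]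
      by_cases hm : rm ∈ S
      · rw [if_pos hm]; simp [istep]
      · rw [if_neg hm]; simp [istep]
    · exact ⟨h2n, hcard, hrooms, hLS, hvall, hfresh, hdc⟩

lemma step_offl (s : ℕ) (dn : Finset (Fin n)) (t : ℕ)
    (hd : holds n r hn sch (.offl s dn) t) :
    ∃ d', holds n r hn sch d' (t+1) ∧
      ((d' = Desc.offl s dn ∧ noopChar n r hn sch t (Desc.offl s dn)) ∨
        mu d' < mu (Desc.offl s dn : Desc n r)) := by
  obtain ⟨h2n, hsn, hcd, hrooms, hLS, hvall, hdone, hfresh, hdc⟩ := hd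
  rcases hsch : sch t with ⟨p, rm⟩
  have h1 : (sch t).1 = p := by rw [hsch]
  have h2 : (sch t).2 = rm := by rw [hsch]
  have hle : t ≤ t + 1 := Nat.le_succ t
  by_cases hp : p = L0 n hn
  · -- leader places the offer
    subst hp
    have hout : OUT n r sch t = ((lstep n r (LSt.waitc s false) 0).2 : Fin 4 × Bool) := by
      rw [OUT_l n r hn sch t h1, h2, hrooms rm, hLS]
    have hLS' : LS n r hn sch (t+1) = (lstep n r (LSt.waitc s false) 0).1 := by
      rw [LS_succ, if_pos h1, h2, hrooms rm, hLS]
    have hIS' : ∀ q, q ≠ L0 n hn → IS n r sch q (t+1) = IS n r sch q t := by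
      intro q hq
      rw [IS_succ, if_neg (fun he => hq (he.trans h1))]
    refine ⟨.offp s rm dn, ⟨h2n, hsn, hcd, ?_, ?_, ?_, ?_, ?_, ?_, ?_⟩, Or.inr ?_⟩
    · rw [V_succ, h2, if_pos rfl, hout]
      simp [lstep]
    · intro rm' hne
      rw [V_succ, h2, if_neg hne, hrooms rm']
    · rw [hLS']
      simp [lstep]
    · exact vAll_mono n r sch hle hvall
    · exact ⟨hdone.1, fun q hq => ⟨(hIS' q (fun he => hdone.1 (he ▸ hq))) ▸ (hdone.2 q hq).1,
        vAll_mono n r sch hle (hdone.2 q hq).2⟩⟩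
    · intro q hq hq2 hq3
      rw [hIS' q hq]; exact hfresh q hq hq2 hq3
    · rw [Dc_succ, hout]
      simp [lstep, hdc]
    · simp only [mu]; omega
  · -- idlers can do nothing
    have hst : istep r (IS n r sch p t) 0 = (IS n r sch p t, 0, false) := by
      by_cases hpd : p ∈ dn
      · rw [(hdone.2 p hpd).1]; simp [istep]
      · rw [hfresh p hp hpd (Finset.notMem_empty p)]; simp [istep]
    refine ⟨.offl s dn, noop_i n r hn sch _ t (h1 ▸ hp) ?_ ?_,
      Or.inl ⟨rfl, fun hL => hp (h1.symm.trans hL)⟩⟩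
    · rw [h1, h2, hrooms rm, hst]
    · exact ⟨h2n, hsn, hcd, hrooms, hLS, hvall, hdone, hfresh, hdc⟩

lemma step_offp (hr : 0 < r) (s : ℕ) (o : Fin r) (dn : Finset (Fin n)) (t : ℕ)
    (hd : holds n r hn sch (.offp s o dn) t) :
    ∃ d', holds n r hn sch d' (t+1) ∧
      ((d' = Desc.offp s o dn ∧ noopChar n r hn sch t (Desc.offp s o dn)) ∨
        mu d' < mu (Desc.offp s o dn : Desc n r)) := by
  obtain ⟨h2n, hsn, hcd, hro, hrooms, hLS, hvall, hdone, hfresh, hdc⟩ := hd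
  rcases hsch : sch t with ⟨p, rm⟩
  have h1 : (sch t).1 = p := by rw [hsch]
  have h2 : (sch t).2 = rm := by rw [hsch]
  have hle : t ≤ t + 1 := Nat.le_succ t
  have hback : holds n r hn sch (.offp s o dn) t :=
    ⟨h2n, hsn, hcd, hro, hrooms, hLS, hvall, hdone, hfresh, hdc⟩
  by_cases hp : p = L0 n hn
  · subst hp
    refine ⟨.offp s o dn, noop_l n r hn sch _ t h1 ?_ hback, Or.inl ⟨rfl, Or.inl h1⟩⟩
    by_cases ho : rm = o
    · rw [h2, ho, hro, hLS]
      simp [lstep]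
    · rw [h2, hrooms rm ho, hLS]
      simp [lstep]
  · by_cases hpd : p ∈ dn
    · refine ⟨.offp s o dn, noop_i n r hn sch _ t (h1 ▸ hp) ?_ hback,
        Or.inl ⟨rfl, Or.inr (Or.inl (by rw [h1]; exact hpd))⟩⟩
      rw [h1, h2, (hdone.2 p hpd).1]
      simp [istep]
    · have hf : IS n r sch p t = .fresh := hfresh p hp hpd (Finset.notMem_empty p)
      by_cases ho : rm = o
      · -- the claim!
        subst ho
        have hcur : V n r sch t rm = 2 := hro
        have hout : OUT n r sch t = ((istep r ISt.fresh 2).2 : Fin 4 × Bool) := by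
          rw [OUT_i n r hn sch t (h1 ▸ hp), h1, h2, hcur, hf]
        have hout1 : (OUT n r sch t).1 = 1 := by
          rw [hout]; by_cases h1r : 1 = r <;> simp [istep, h1r]
        have hout2 : (OUT n r sch t).2 = false := by
          rw [hout]; by_cases h1r : 1 = r <;> simp [istep, h1r]
        have hLS' : LS n r hn sch (t+1) = LS n r hn sch t := by
          rw [LS_succ, if_neg (h1 ▸ hp)]
        have hIS' : ∀ q, q ≠ p → IS n r sch q (t+1) = IS n r sch q t := by
          intro q hq
          rw [IS_succ, if_neg (h1 ▸ hq)]
        have hISp : IS n r sch p (t+1) = (istep r ISt.fresh 2).1 := by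
          rw [IS_succ, if_pos h1.symm, h2, hcur, hf]
        refine ⟨.mk s p {rm} ∅ dn,
          ⟨h2n, hsn, hcd, hp, hpd, Finset.empty_subset _, ?_, by simpa using hr, ?_,
            ?_, ?_, ?_, ?_, ?_, ?_, ?_, ?_⟩, Or.inr ?_⟩
        · rw [Finset.card_singleton]; omega
        · rw [Finset.card_singleton]
        · intro rm'
          rw [V_succ, h2]
          by_cases he : rm' = rm
          · rw [if_pos he, hout1]
            simp [he]
          · rw [if_neg he, hrooms rm' he]
            simp [Finset.notMem_empty, Finset.mem_singleton, he]
        · rw [hLS', hLS]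
          simp
        · rw [hISp, Finset.card_singleton]
          by_cases h1r : 1 = r <;> simp [istep, h1r]
        · intro rm' hmem
          rw [Finset.mem_singleton] at hmem
          rw [hmem]
          exact new_visit n r sch t p rm hsch
        · exact vAll_mono n r sch hle hvall
        · exact ⟨hdone.1, fun q hq => ⟨(hIS' q (fun he => hpd (he ▸ hq))) ▸ (hdone.2 q hq).1,
            vAll_mono n r sch hle (hdone.2 q hq).2⟩⟩
        · intro q hq hq2 hq3
          rw [Finset.mem_singleton] at hq3
          rw [hIS' q hq3]
          exact hfresh q hq hq2 (Finset.notMem_empty q)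
        · rw [Dc_succ, hout2, Bool.or_false]
          exact hdc
        · simp only [mu, Finset.card_singleton, Finset.card_empty]
          omega
      · refine ⟨.offp s o dn, noop_i n r hn sch _ t (h1 ▸ hp) ?_ hback,
          Or.inl ⟨rfl, Or.inr (Or.inr (by rw [h2]; exact ho))⟩⟩
        rw [h1, h2, hrooms rm ho, hf]
        simp [istep]

end Steps2

end FourCfg
namespace FourCfg

section Steps3

variable (n r : ℕ) (hn : 0 < n) (sch : Schedule n r)

lemma consumeRes_val (s c : ℕ) : (consumeRes n r s c).2.1 = 3 := by
  unfold consumeRes; split_ifs <;> rfl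

lemma cover_all (dn : Finset (Fin n)) (a : Fin n) (haL : a ≠ L0 n hn) (had : a ∉ dn)
    (hdL : L0 n hn ∉ dn) (hcard : (insert a dn).card = n - 1) :
    ∀ q, q ≠ L0 n hn → q ∈ insert a dn := by
  have hsub : insert a dn ⊆ Finset.univ.erase (L0 n hn) := by
    intro x hx
    rcases Finset.mem_insert.mp hx with h | h
    · exact Finset.mem_erase.mpr ⟨h ▸ haL, Finset.mem_univ _⟩
    · exact Finset.mem_erase.mpr ⟨fun he => hdL (he ▸ h), Finset.mem_univ _⟩
  have hcerase : (Finset.univ.erase (L0 n hn)).card = n - 1 := by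
    rw [Finset.card_erase_of_mem (Finset.mem_univ _), Finset.card_univ, Fintype.card_fin]
  have heq := Finset.eq_of_subset_of_card_le hsub (by rw [hcerase, hcard])
  intro q hq
  rw [heq]
  exact Finset.mem_erase.mpr ⟨hq, Finset.mem_univ _⟩

lemma step_mk (s : ℕ) (a : Fin n) (M D : Finset (Fin r)) (dn : Finset (Fin n)) (t : ℕ)
    (hd : holds n r hn sch (.mk s a M D dn) t) :
    ∃ d', holds n r hn sch d' (t+1) ∧
      ((d' = Desc.mk s a M D dn ∧ noopChar n r hn sch t (Desc.mk s a M D dn)) ∨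
        mu d' < mu (Desc.mk s a M D dn : Desc n r)) := by
  obtain ⟨h2n, hsn, hcd, haL, had, hDM, hMr, hDr, hM1, hrooms, hLS, hISa, hMfacts, hvall,
    hdone, hfreshOK, hdc⟩ := hd
  have hback : holds n r hn sch (.mk s a M D dn) t :=
    ⟨h2n, hsn, hcd, haL, had, hDM, hMr, hDr, hM1, hrooms, hLS, hISa, hMfacts, hvall,
      hdone, hfreshOK, hdc⟩
  rcases hsch : sch t with ⟨p, rm⟩
  have h1 : (sch t).1 = p := by rw [hsch]
  have h2 : (sch t).2 = rm := by rw [hsch]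
  have hle : t ≤ t + 1 := Nat.le_succ t
  by_cases hp : p = L0 n hn
  · subst hp
    by_cases hmD : rm ∈ D
    · -- leader sees a consumed room: no-op
      refine ⟨.mk s a M D dn, noop_l n r hn sch _ t h1 ?_ hback,
        Or.inl ⟨rfl, fun _ => Or.inl (by rw [h2]; exact hmD),
          fun hA => absurd (hA.symm.trans h1) haL⟩⟩
      rw [h2, hrooms rm, if_pos hmD, hLS]
      by_cases hD0 : D.card = 0 <;> simp [hD0, lstep]
    · by_cases hmM : rm ∈ M
      · -- leader consumes a mark
        have hcur : V n r sch t rm = 1 := by rw [hrooms rm, if_neg hmD, if_pos hmM]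
        have hstep : lstep n r (LS n r hn sch t) 1 = consumeRes n r s (D.card + 1) := by
          rw [hLS]
          by_cases hD0 : D.card = 0
          · rw [if_pos hD0, hD0]; simp [lstep]
          · rw [if_neg hD0]; simp [lstep]
        have hout : OUT n r sch t = (consumeRes n r s (D.card + 1)).2 := by
          rw [OUT_l n r hn sch t h1, h2, hcur, hstep]
        have hLS' : LS n r hn sch (t+1) = (consumeRes n r s (D.card + 1)).1 := by
          rw [LS_succ, if_pos h1, h2, hcur, hstep]
        have hIS' : ∀ q, q ≠ L0 n hn → IS n r sch q (t+1) = IS n r sch q t := by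
          intro q hq
          rw [IS_succ, if_neg (fun he => hq (he.trans h1))]
        by_cases hc : D.card + 1 = r
        · -- the stage is complete
          have hMeq : insert rm D = M := by
            apply Finset.eq_of_subset_of_card_le (Finset.insert_subset_iff.mpr ⟨hmM, hDM⟩)
            rw [Finset.card_insert_of_notMem hmD, hc]
            exact hMr
          have hMcard : M.card = r := by
            rw [← hMeq, Finset.card_insert_of_notMem hmD, hc]
          have hMuniv : M = Finset.univ := by
            apply Finset.eq_univ_of_card
            rw [hMcard, Fintype.card_fin]
          have hISa' : IS n r sch a t = .idone := by rw [hISa, if_pos hMcard]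
          have hroomsS : ∀ rm', V n r sch (t+1) rm' = 3 := by
            intro rm'
            rw [V_succ, h2]
            by_cases he : rm' = rm
            · rw [if_pos he, hout, consumeRes_val]
            · rw [if_neg he, hrooms rm']
              have hin : rm' ∈ insert rm D := by
                rw [hMeq]; exact hMuniv ▸ Finset.mem_univ rm'
              rcases Finset.mem_insert.mp hin with h | h
              · exact absurd h he
              · rw [if_pos h]
          by_cases hlast : s + 1 = n - 1
          · -- declare!
            refine ⟨.decl, ⟨?_, ?_⟩, Or.inr ?_⟩
            · rw [Dc_succ, hout]
              unfold consumeRes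
              rw [if_pos hc, if_pos hlast]
              simp
            · intro q rm'
              by_cases hqL : q = L0 n hn
              · subst hqL
                exact vb_mono n r sch hle (hvall rm')
              · have hcins : (insert a dn).card = n - 1 := by
                  rw [Finset.card_insert_of_notMem had, hcd]; omega
                rcases Finset.mem_insert.mp
                    (cover_all n hn dn a haL had hdone.1 hcins q hqL) with h | h
                · rw [h]
                  exact vb_mono n r sch hle (hMfacts rm' (hMuniv ▸ Finset.mem_univ rm'))
                · exact vb_mono n r sch hle ((hdone.2 q h).2 rm')
            · simp only [mu]; omega
          · -- move to the reset phase
            have hr0 : 0 < r := by omega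
            refine ⟨.rs s ∅ (insert a dn),
              ⟨h2n, by omega, ?_, by simpa using hr0, ?_, ?_, ?_, ?_, ?_, ?_⟩, Or.inr ?_⟩
            · rw [Finset.card_insert_of_notMem had, hcd]
            · intro rm'
              simp only [Finset.notMem_empty, if_false]
              exact hroomsS rm'
            · rw [hLS']
              unfold consumeRes
              rw [if_pos hc, if_neg hlast]
              simp
            · exact vAll_mono n r sch hle hvall
            · refine ⟨fun hmem => (Finset.mem_insert.mp hmem).elim (fun h => haL h.symm)
                hdone.1, fun q hq => ?_⟩
              rcases Finset.mem_insert.mp hq with h | h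
              · subst h
                exact ⟨(hIS' q haL).trans hISa',
                  fun rm' => vb_mono n r sch hle (hMfacts rm' (hMuniv ▸ Finset.mem_univ rm'))⟩
              · exact ⟨(hIS' q (fun he => hdone.1 (he ▸ h))).trans (hdone.2 q h).1,
                  vAll_mono n r sch hle (hdone.2 q h).2⟩
            · intro q hq hq2 _
              have hq2' : q ∉ dn := fun h => hq2 (Finset.mem_insert_of_mem h)
              have hqa : q ∉ ({a} : Finset (Fin n)) := by
                simp only [Finset.mem_singleton]
                intro h
                exact hq2 (h ▸ Finset.mem_insert_self a dn)
              rw [hIS' q hq]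
              exact hfreshOK q hq hq2' hqa
            · rw [Dc_succ, hout]
              unfold consumeRes
              rw [if_pos hc, if_neg hlast]
              simpa using hdc
            · simp only [mu, Finset.card_empty]
              omega
        · -- keep collecting
          refine ⟨.mk s a M (insert rm D) dn,
            ⟨h2n, hsn, hcd, haL, had, Finset.insert_subset_iff.mpr ⟨hmM, hDM⟩, hMr, ?_, hM1,
              ?_, ?_, ?_, ?_, ?_, ?_, ?_, ?_⟩, Or.inr ?_⟩
          · rw [Finset.card_insert_of_notMem hmD]; omega
          · intro rm'
            rw [V_succ, h2]
            by_cases he : rm' = rm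
            · rw [if_pos he, hout, consumeRes_val,
                if_pos (by rw [he]; exact Finset.mem_insert_self rm D)]
            · rw [if_neg he, hrooms rm']
              simp [Finset.mem_insert, he]
          · rw [hLS']
            unfold consumeRes
            rw [if_neg hc, Finset.card_insert_of_notMem hmD]
            simp
          · rw [hIS' a haL]
            exact hISa
          · intro rm' hm
            exact vb_mono n r sch hle (hMfacts rm' hm)
          · exact vAll_mono n r sch hle hvall
          · exact ⟨hdone.1, fun q hq => ⟨(hIS' q (fun he => hdone.1 (he ▸ hq))).trans
              (hdone.2 q hq).1, vAll_mono n r sch hle (hdone.2 q hq).2⟩⟩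
          · intro q hq hq2 hq3
            rw [hIS' q hq]
            exact hfreshOK q hq hq2 hq3
          · rw [Dc_succ, hout]
            unfold consumeRes
            rw [if_neg hc]
            simpa using hdc
          · simp only [mu, Finset.card_insert_of_notMem hmD]
            omega
      · -- leader sees an unmarked room: no-op
        refine ⟨.mk s a M D dn, noop_l n r hn sch _ t h1 ?_ hback,
          Or.inl ⟨rfl, fun _ => Or.inr (by rw [h2]; exact hmM),
            fun hA => absurd (hA.symm.trans h1) haL⟩⟩
        rw [h2, hrooms rm, if_neg hmD, if_neg hmM, hLS]
        by_cases hD0 : D.card = 0 <;> simp [hD0, lstep]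
  · by_cases hpa : p = a
    · -- the active idler
      have h1a : (sch t).1 = a := h1.trans hpa
      have hschL : (sch t).1 ≠ L0 n hn := by rw [h1a]; exact haL
      by_cases hMr0 : M.card = r
      · -- already finished marking: no-op
        refine ⟨.mk s a M D dn, noop_i n r hn sch _ t hschL ?_ hback,
          Or.inl ⟨rfl, fun hL => absurd hL hschL, fun _ => Or.inl hMr0⟩⟩
        rw [h1a, hISa, if_pos hMr0]
        simp [istep]
      · have hISa2 : IS n r sch a t = .act M.card := by rw [hISa, if_neg hMr0]
        by_cases hmM : rm ∈ M
        · -- already marked: no-op (value is 1 or 3)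
          refine ⟨.mk s a M D dn, noop_i n r hn sch _ t hschL ?_ hback,
            Or.inl ⟨rfl, fun hL => absurd hL hschL,
              fun _ => Or.inr (by rw [h2]; exact hmM)⟩⟩
          rw [h1a, h2, hISa2, hrooms rm]
          by_cases hmD : rm ∈ D
          · rw [if_pos hmD]; simp [istep]
          · rw [if_neg hmD, if_pos hmM]; simp [istep]
        · -- mark a new room
          have hmD : rm ∉ D := fun h => hmM (hDM h)
          have hcur : V n r sch t rm = 0 := by rw [hrooms rm, if_neg hmD, if_neg hmM]
          have hout : OUT n r sch t = (istep r (ISt.act M.card) 0).2 := by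
            rw [OUT_i n r hn sch t hschL, h1a, h2, hcur, hISa2]
          have hout1 : (OUT n r sch t).1 = 1 := by
            rw [hout]; by_cases hM1r : M.card + 1 = r <;> simp [istep, hM1r]
          have hout2 : (OUT n r sch t).2 = false := by
            rw [hout]; by_cases hM1r : M.card + 1 = r <;> simp [istep, hM1r]
          have hLS' : LS n r hn sch (t+1) = LS n r hn sch t := by
            rw [LS_succ, if_neg hschL]
          have hIS' : ∀ q, q ≠ a → IS n r sch q (t+1) = IS n r sch q t := by
            intro q hq
            rw [IS_succ, if_neg (fun he => hq (he.trans h1a))]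
          have hISp : IS n r sch a (t+1) = (istep r (ISt.act M.card) 0).1 := by
            rw [IS_succ, if_pos h1a.symm, h2, hcur, hISa2]
          refine ⟨.mk s a (insert rm M) D dn,
            ⟨h2n, hsn, hcd, haL, had, hDM.trans (Finset.subset_insert rm M), ?_, hDr,
              ?_, ?_, ?_, ?_, ?_, ?_, ?_, ?_, ?_⟩, Or.inr ?_⟩
          · rw [Finset.card_insert_of_notMem hmM]; omega
          · rw [Finset.card_insert_of_notMem hmM]; omega
          · intro rm'
            rw [V_succ, h2]
            by_cases he : rm' = rm
            · rw [if_pos he, hout1, if_neg (by rw [he]; exact hmD),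
                if_pos (by rw [he]; exact Finset.mem_insert_self rm M)]
            · rw [if_neg he, hrooms rm']
              simp [Finset.mem_insert, he]
          · rw [hLS', hLS]
          · rw [hISp, Finset.card_insert_of_notMem hmM]
            by_cases hM1r : M.card + 1 = r <;> simp [istep, hM1r]
          · intro rm' hm
            rcases Finset.mem_insert.mp hm with h | h
            · rw [h]
              exact new_visit n r sch t a rm (hpa ▸ hsch)
            · exact vb_mono n r sch hle (hMfacts rm' h)
          · exact vAll_mono n r sch hle hvall
          · exact ⟨hdone.1, fun q hq => ⟨(hIS' q (fun he => had (he ▸ hq))).trans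
              (hdone.2 q hq).1, vAll_mono n r sch hle (hdone.2 q hq).2⟩⟩
          · intro q hq hq2 hq3
            rw [hIS' q (by simpa using hq3)]
            exact hfreshOK q hq hq2 hq3
          · rw [Dc_succ, hout2, Bool.or_false]
            exact hdc
          · simp only [mu, Finset.card_insert_of_notMem hmM]
            omega
    · -- other idlers: no-op
      by_cases hpd : p ∈ dn
      · refine ⟨.mk s a M D dn, noop_i n r hn sch _ t (h1 ▸ hp) ?_ hback,
          Or.inl ⟨rfl, fun hL => absurd (h1.symm.trans hL) hp,
            fun hA => absurd (h1.symm.trans hA) hpa⟩⟩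
        rw [h1, (hdone.2 p hpd).1]
        simp [istep]
      · have hf : IS n r sch p t = .fresh :=
          hfreshOK p hp hpd (by simpa using hpa)
        refine ⟨.mk s a M D dn, noop_i n r hn sch _ t (h1 ▸ hp) ?_ hback,
          Or.inl ⟨rfl, fun hL => absurd (h1.symm.trans hL) hp,
            fun hA => absurd (h1.symm.trans hA) hpa⟩⟩
        rw [h1, h2, hf, hrooms rm]
        split_ifs <;> simp [istep]

lemma step_rs (s : ℕ) (S : Finset (Fin r)) (dn : Finset (Fin n)) (t : ℕ)
    (hd : holds n r hn sch (.rs s S dn) t) :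
    ∃ d', holds n r hn sch d' (t+1) ∧
      ((d' = Desc.rs s S dn ∧ noopChar n r hn sch t (Desc.rs s S dn)) ∨
        mu d' < mu (Desc.rs s S dn : Desc n r)) := by
  obtain ⟨h2n, hsn, hcd, hcard, hrooms, hLS, hvall, hdone, hfresh, hdc⟩ := hd
  have hback : holds n r hn sch (.rs s S dn) t :=
    ⟨h2n, hsn, hcd, hcard, hrooms, hLS, hvall, hdone, hfresh, hdc⟩
  rcases hsch : sch t with ⟨p, rm⟩
  have h1 : (sch t).1 = p := by rw [hsch]
  have h2 : (sch t).2 = rm := by rw [hsch]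
  have hle : t ≤ t + 1 := Nat.le_succ t
  by_cases hp : p = L0 n hn
  · subst hp
    by_cases hm : rm ∈ S
    · refine ⟨.rs s S dn, noop_l n r hn sch _ t h1 ?_ hback,
        Or.inl ⟨rfl, fun _ => by rw [h2]; exact hm⟩⟩
      rw [h2, hrooms rm, if_pos hm, hLS]
      simp [lstep]
    · have hcur : V n r sch t rm = 3 := by rw [hrooms rm, if_neg hm]
      have hout : OUT n r sch t = ((lstep n r (LSt.rst s S.card) 3).2 : Fin 4 × Bool) := by
        rw [OUT_l n r hn sch t h1, h2, hcur, hLS]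
      have hLS' : LS n r hn sch (t+1) = (lstep n r (LSt.rst s S.card) 3).1 := by
        rw [LS_succ, if_pos h1, h2, hcur, hLS]
      have hIS' : ∀ q, q ≠ L0 n hn → IS n r sch q (t+1) = IS n r sch q t := by
        intro q hq
        rw [IS_succ, if_neg (fun he => hq (he.trans h1))]
      by_cases hc : S.card + 1 = r
      · -- stage fully reset: next stage begins
        refine ⟨.offl (s+1) dn, ⟨h2n, by omega, by omega, ?_, ?_, ?_, ?_, ?_, ?_⟩, Or.inr ?_⟩
        · intro rm'
          rw [V_succ, h2, hout]
          by_cases he : rm' = rm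
          · rw [if_pos he]
            simp [lstep, hc]
          · rw [if_neg he]
            have hS : rm' ∈ S := by
              have hmem := insert_eq_univ S rm hm hc ▸ Finset.mem_univ rm'
              rcases Finset.mem_insert.mp hmem with h | h
              · exact absurd h he
              · exact h
            simp [hrooms rm', if_pos hS]
        · rw [hLS']
          simp [lstep, hc]
        · exact vAll_mono n r sch hle hvall
        · exact ⟨hdone.1, fun q hq => ⟨(hIS' q (fun he => hdone.1 (he ▸ hq))).trans
            (hdone.2 q hq).1, vAll_mono n r sch hle (hdone.2 q hq).2⟩⟩
        · intro q hq hq2 hq3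
          rw [hIS' q hq]
          exact hfresh q hq hq2 hq3
        · rw [Dc_succ, hout]
          simp [lstep, hc, hdc]
        · simp only [mu]
          have h5 : n - 1 - s = (n - 1 - (s+1)) + 1 := by omega
          have hexp : (n-1-s)*(4*r+4) = (n-1-(s+1))*(4*r+4) + (4*r+4) := by
            calc (n-1-s)*(4*r+4) = ((n-1-(s+1)) + 1)*(4*r+4) := by rw [← h5]
              _ = (n-1-(s+1))*(4*r+4) + (4*r+4) := by ring
          omega
      · refine ⟨.rs s (insert rm S) dn, ⟨h2n, hsn, hcd, ?_, ?_, ?_, ?_, ?_, ?_, ?_⟩,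
          Or.inr ?_⟩
        · rw [Finset.card_insert_of_notMem hm]; omega
        · intro rm'
          rw [V_succ, h2, hout]
          by_cases he : rm' = rm
          · rw [if_pos he, if_pos (by rw [he]; exact Finset.mem_insert_self rm S)]
            simp [lstep, hc]
          · rw [if_neg he, hrooms rm']
            simp [Finset.mem_insert, he]
        · rw [hLS', Finset.card_insert_of_notMem hm]
          simp [lstep, hc]
        · exact vAll_mono n r sch hle hvall
        · exact ⟨hdone.1, fun q hq => ⟨(hIS' q (fun he => hdone.1 (he ▸ hq))).trans
            (hdone.2 q hq).1, vAll_mono n r sch hle (hdone.2 q hq).2⟩⟩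
        · intro q hq hq2 hq3
          rw [hIS' q hq]
          exact hfresh q hq hq2 hq3
        · rw [Dc_succ, hout]
          simp [lstep, hc, hdc]
        · simp only [mu, Finset.card_insert_of_notMem hm]
          omega
  · have hst : istep r (IS n r sch p t) (V n r sch t rm) = (IS n r sch p t,
        V n r sch t rm, false) := by
      by_cases hpd : p ∈ dn
      · rw [(hdone.2 p hpd).1]
        simp [istep]
      · rw [hfresh p hp hpd (Finset.notMem_empty p), hrooms rm]
        split_ifs <;> simp [istep]
    refine ⟨.rs s S dn, noop_i n r hn sch _ t (h1 ▸ hp) ?_ hback,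
      Or.inl ⟨rfl, fun hL => absurd (h1.symm.trans hL) hp⟩⟩
    rw [h1, h2, hst]

lemma step_decl (t : ℕ) (hd : holds n r hn sch .decl t) : holds n r hn sch .decl (t+1) := by
  obtain ⟨h1, h2⟩ := hd
  exact ⟨by rw [Dc_succ, h1, Bool.true_or], fun p rm => vb_mono n r sch (Nat.le_succ t) (h2 p rm)⟩

end Steps3

end FourCfg
namespace FourCfg

section Live

variable (n r : ℕ) (hn : 0 < n) (sch : Schedule n r)

lemma step_any (hr : 0 < r) (d : Desc n r) (t : ℕ) (hd : holds n r hn sch d t) :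
    ∃ d', holds n r hn sch d' (t+1) ∧ (d' = d ∨ mu d' < mu d) := by
  cases d with
  | pre S =>
      obtain ⟨d', h, hor⟩ := step_pre n r hn sch S t hd
      exact ⟨d', h, hor.imp And.left id⟩
  | pre2 S =>
      obtain ⟨d', h, hor⟩ := step_pre2 n r hn sch S t hd
      exact ⟨d', h, hor.imp And.left id⟩
  | offl s dn =>
      obtain ⟨d', h, hor⟩ := step_offl n r hn sch s dn t hd
      exact ⟨d', h, hor.imp And.left id⟩
  | offp s o dn =>
      obtain ⟨d', h, hor⟩ := step_offp n r hn sch hr s o dn t hd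
      exact ⟨d', h, hor.imp And.left id⟩
  | mk s a M D dn =>
      obtain ⟨d', h, hor⟩ := step_mk n r hn sch s a M D dn t hd
      exact ⟨d', h, hor.imp And.left id⟩
  | rs s S dn =>
      obtain ⟨d', h, hor⟩ := step_rs n r hn sch s S dn t hd
      exact ⟨d', h, hor.imp And.left id⟩
  | decl =>
      exact ⟨.decl, step_decl n r hn sch t hd, Or.inl rfl⟩

lemma exists_not_mem_of_card_lt {r : ℕ} (S : Finset (Fin r)) (h : S.card < r) :
    ∃ rm, rm ∉ S := by
  by_contra hall
  push_neg at hall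
  have : S = Finset.univ := Finset.eq_univ_iff_forall.mpr hall
  rw [this, Finset.card_univ, Fintype.card_fin] at h
  omega

lemma exists_fresh (dn : Finset (Fin n)) (h : dn.card + 2 ≤ n) :
    ∃ p, p ≠ L0 n hn ∧ p ∉ dn := by
  by_contra h'
  push_neg at h'
  have hsub : Finset.univ.erase (L0 n hn) ⊆ dn := fun x hx => h' x (Finset.mem_erase.mp hx).1
  have hc := Finset.card_le_card hsub
  rw [Finset.card_erase_of_mem (Finset.mem_univ _), Finset.card_univ, Fintype.card_fin] at hc
  omega

lemma fire (hr : 0 < r) (d : Desc n r) (t0 : ℕ) (hd0 : holds n r hn sch d t0)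
    (hne : d ≠ .decl) :
    ∃ pp, ∀ t', holds n r hn sch d t' → sch t' = pp →
      ∃ d', holds n r hn sch d' (t'+1) ∧ mu d' < mu d := by
  cases d with
  | pre S =>
      obtain ⟨rm, hrm⟩ := exists_not_mem_of_card_lt S hd0.1
      refine ⟨(L0 n hn, rm), fun t' h' hs => ?_⟩
      obtain ⟨d', h, hor⟩ := step_pre n r hn sch S t' h'
      rcases hor with ⟨_, hchar⟩ | hlt
      · exact absurd (hchar (by rw [hs])) (by rw [hs]; exact hrm)
      · exact ⟨d', h, hlt⟩
  | pre2 S =>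
      obtain ⟨rm, hrm⟩ := exists_not_mem_of_card_lt S hd0.2.1
      refine ⟨(L0 n hn, rm), fun t' h' hs => ?_⟩
      obtain ⟨d', h, hor⟩ := step_pre2 n r hn sch S t' h'
      rcases hor with ⟨_, hchar⟩ | hlt
      · exact absurd (hchar (by rw [hs])) (by rw [hs]; exact hrm)
      · exact ⟨d', h, hlt⟩
  | offl s dn =>
      refine ⟨(L0 n hn, ⟨0, hr⟩), fun t' h' hs => ?_⟩
      obtain ⟨d', h, hor⟩ := step_offl n r hn sch s dn t' h'
      rcases hor with ⟨_, hchar⟩ | hlt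
      · exact absurd (by rw [hs] : (sch t').1 = L0 n hn) hchar
      · exact ⟨d', h, hlt⟩
  | offp s o dn =>
      obtain ⟨p, hpL, hpd⟩ := exists_fresh n hn dn
        (by have h1 := hd0.2.1; have h2 := hd0.2.2.1; omega)
      refine ⟨(p, o), fun t' h' hs => ?_⟩
      obtain ⟨d', h, hor⟩ := step_offp n r hn sch hr s o dn t' h'
      rcases hor with ⟨_, hchar⟩ | hlt
      · rcases hchar with h1 | h2 | h3
        · exact absurd (by rw [hs] at h1; exact h1) hpL
        · rw [hs] at h2; exact absurd h2 hpd
        · exact absurd (by rw [hs] : (sch t').2 = o) h3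
      · exact ⟨d', h, hlt⟩
  | mk s a M D dn =>
      by_cases hMD : (M \ D).Nonempty
      · obtain ⟨rm, hrm⟩ := hMD
        rw [Finset.mem_sdiff] at hrm
        refine ⟨(L0 n hn, rm), fun t' h' hs => ?_⟩
        obtain ⟨d', h, hor⟩ := step_mk n r hn sch s a M D dn t' h'
        rcases hor with ⟨_, hchar⟩ | hlt
        · rcases hchar.1 (by rw [hs]) with h1 | h2
          · rw [hs] at h1; exact absurd h1 hrm.2
          · rw [hs] at h2; exact absurd hrm.1 h2
        · exact ⟨d', h, hlt⟩
      · have hMeqD : M = D := by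
          have hsub : M ⊆ D := by
            rw [← Finset.sdiff_eq_empty_iff_subset]
            exact Finset.not_nonempty_iff_eq_empty.mp hMD
          exact Finset.Subset.antisymm hsub hd0.2.2.2.2.2.1
        have hMcr : M.card < r := by rw [hMeqD]; exact hd0.2.2.2.2.2.2.2.1
        obtain ⟨rm, hrm⟩ := exists_not_mem_of_card_lt M hMcr
        refine ⟨(a, rm), fun t' h' hs => ?_⟩
        obtain ⟨d', h, hor⟩ := step_mk n r hn sch s a M D dn t' h'
        rcases hor with ⟨_, hchar⟩ | hlt
        · rcases hchar.2 (by rw [hs]) with h1 | h2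
          · omega
          · rw [hs] at h2; exact absurd h2 hrm
        · exact ⟨d', h, hlt⟩
  | rs s S dn =>
      obtain ⟨rm, hrm⟩ := exists_not_mem_of_card_lt S hd0.2.2.2.1
      refine ⟨(L0 n hn, rm), fun t' h' hs => ?_⟩
      obtain ⟨d', h, hor⟩ := step_rs n r hn sch s S dn t' h'
      rcases hor with ⟨_, hchar⟩ | hlt
      · exact absurd (hchar (by rw [hs])) (by rw [hs]; exact hrm)
      · exact ⟨d', h, hlt⟩
  | decl => exact absurd rfl hne

lemma walk (hr : 0 < r) (d : Desc n r) (t : ℕ) (hd : holds n r hn sch d t) (k : ℕ) :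
    holds n r hn sch d (t+k) ∨
      ∃ d' t', t' ≤ t + k ∧ holds n r hn sch d' t' ∧ mu d' < mu d := by
  induction k with
  | zero => exact Or.inl hd
  | succ k ih =>
      rcases ih with hk | ⟨d', t', h1, h2, h3⟩
      · rcases step_any n r hn sch hr d (t+k) hk with ⟨d', hd', hor⟩
        rcases hor with he | hlt
        · exact Or.inl (he ▸ hd')
        · exact Or.inr ⟨d', (t+k)+1, by omega, hd', hlt⟩
      · exact Or.inr ⟨d', t', by omega, h2, h3⟩

lemma exists_visit (hv : ValidSchedule sch) (pp : Fin n × Fin r) (t : ℕ) :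
    ∃ t', t ≤ t' ∧ sch t' = pp := by
  by_contra h
  push_neg at h
  apply hv pp.1 pp.2
  apply Set.Finite.subset (Set.finite_Iio t)
  intro x hx
  simp only [Set.mem_setOf_eq] at hx
  simp only [Set.mem_Iio]
  by_contra hge
  push_neg at hge
  exact h x hge (by rw [hx])

lemma reach (hv : ValidSchedule sch) (hr : 0 < r) :
    ∀ N d t, mu d ≤ N → holds n r hn sch d t → ∃ t', Dc n r sch t' = true := by
  intro N
  induction N using Nat.strong_induction_on with
  | _ N IH =>
    intro d t hmu hd
    by_cases hne : d = Desc.decl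
    · subst hne
      exact ⟨t, hd.1⟩
    · obtain ⟨pp, hfire⟩ := fire n r hn sch hr d t hd hne
      obtain ⟨t1, ht1, hs1⟩ := exists_visit n r sch hv pp t
      rcases walk n r hn sch hr d t hd (t1 - t) with hcase | ⟨d', t', _, hd', hlt⟩
      · have heq : t + (t1 - t) = t1 := by omega
        rw [heq] at hcase
        obtain ⟨d', hd', hlt⟩ := hfire t1 hcase hs1
        exact IH (mu d') (by omega) d' (t1+1) (le_refl _) hd'
      · exact IH (mu d') (by omega) d' t' (le_refl _) hd'

lemma holds_init (hr : 0 < r) : holds n r hn sch (.pre ∅) 0 := by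
  refine ⟨by simpa using hr, ?_, ?_, ?_, ?_, ?_⟩
  · intro rm
    simp only [Finset.notMem_empty, if_false]
    rfl
  · show lstate n r [] = _
    simp [lstate]
  · intro rm h
    exact absurd h (Finset.notMem_empty rm)
  · intro p _
    show istate r [] = _
    simp [istate]
  · rfl

lemma holds_all (hr : 0 < r) : ∀ t, ∃ d, holds n r hn sch d t := by
  intro t
  induction t with
  | zero => exact ⟨.pre ∅, holds_init n r hn sch hr⟩
  | succ t ih =>
      obtain ⟨d, hd⟩ := ih
      obtain ⟨d', hd', _⟩ := step_any n r hn sch hr d t hd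
      exact ⟨d', hd'⟩

lemma safety (hn : 0 < n) (hr : 0 < r) (t : ℕ) (h : Dc n r sch t = true) :
    ∀ p rm, VisitedBy sch t p rm := by
  obtain ⟨d, hd⟩ := holds_all n r hn sch hr t
  cases d with
  | decl => exact hd.2
  | pre S => rw [hd.2.2.2.2.2] at h; cases h
  | pre2 S => rw [hd.2.2.2.2.2.2] at h; cases h
  | offl s dn => rw [hd.2.2.2.2.2.2.2.2] at h; cases h
  | offp s o dn => rw [hd.2.2.2.2.2.2.2.2.2] at h; cases h
  | mk s a M D dn => rw [hd.2.2.2.2.2.2.2.2.2.2.2.2.2.2.2.2] at h; cases h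
  | rs s S dn => rw [hd.2.2.2.2.2.2.2.2.2] at h; cases h

end Live

end FourCfg

/-- with 4 configurations per room (two switches), all rooms
starting in a fixed known configuration, the prisoners have a winning
protocol for any `n` prisoners and `r` rooms. -/
theorem four_configurations_winning (n r : ℕ) (hn : 0 < n) (hr : 0 < r) :
    ∃ σ : Strategy n (Fin 4), Winning σ (fun _ : Fin r => (0 : Fin 4)) := by
  refine ⟨FourCfg.strat n r, fun sch hv => ⟨?_, ?_⟩⟩
  · obtain ⟨t', h⟩ := FourCfg.reach n r hn sch hv hr
      (FourCfg.mu (FourCfg.Desc.pre ∅ : FourCfg.Desc n r)) (FourCfg.Desc.pre ∅) 0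
      (le_refl _) (FourCfg.holds_init n r hn sch hr)
    exact ⟨t', h⟩
  · intro t hdecl p rm
    exact FourCfg.safety n r sch hn hr t hdecl p rm
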